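/- arXiv:1902.07359 — 2 statements merged into one kernel-verified Lean document; each statement's English description precedes it below -/
import Mathlib

section
/- For the neutral case α = 0 and κ ∈ (0,1), the fixation probability of inefficient individuals in model (M2) case (i), P(y) = (∫_{1-y}^1 e^{-2κu} du)/(∫_0^1 e^{-2κu} du) = (e^{-2κ(1-y)} - e^{-2κ})/(1 - e^{-2κ}), satisfies P(y) < y for all y ∈ (0,1). -/
/-!
Both claims reduce to elementary facts about `u ↦ exp (c * u)` with `c = -2κ < 0`: the integrals
are explicit, and the inequality `P(y) < y` rearranges to `exp (c (1 - y)) < (1 - y) exp c + y`,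
which is strict convexity of `exp` on the chord from `c` to `0`.
-/

open Real

theorem integral_exp_const_mul {c : ℝ} (hc : c ≠ 0) (a b : ℝ) :
    ∫ u in a..b, exp (c * u) = (exp (c * b) - exp (c * a)) / c := by
  rw [intervalIntegral.integral_comp_mul_left (fun x => exp x) hc, integral_exp, smul_eq_mul]
  ring

theorem integral_exp_const_mul_ratio {c : ℝ} (hc : c ≠ 0) (y : ℝ) :
    (∫ u in (1 - y)..1, exp (c * u)) / (∫ u in (0:ℝ)..1, exp (c * u))
      = (exp (c * (1 - y)) - exp c) / (1 - exp c) := by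
  rw [integral_exp_const_mul hc, integral_exp_const_mul hc, div_div_div_cancel_right₀ hc,
    mul_one, mul_zero, exp_zero, ← neg_sub (exp c), ← neg_sub (exp c) 1, neg_div_neg_eq]

theorem exp_mul_one_sub_lt {c y : ℝ} (hc : c ≠ 0) (hy : y ∈ Set.Ioo (0:ℝ) 1) :
    exp (c * (1 - y)) < (1 - y) * exp c + y := by
  have h := strictConvexOn_exp.2 (Set.mem_univ c) (Set.mem_univ 0) hc (sub_pos.2 hy.2) hy.1
    (sub_add_cancel 1 y)
  simpa only [smul_eq_mul, mul_zero, add_zero, exp_zero, mul_one, mul_comm c] using h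

theorem exp_mul_one_sub_sub_div_lt {c y : ℝ} (hc : c < 0) (hy : y ∈ Set.Ioo (0:ℝ) 1) :
    (exp (c * (1 - y)) - exp c) / (1 - exp c) < y := by
  rw [div_lt_iff₀ (sub_pos.2 (exp_lt_one_iff.2 hc))]
  linarith [exp_mul_one_sub_lt hc.ne hy]

/-- Neutral case `α = 0` of model (M2), case (i): the fixation probability of inefficient
individuals satisfies `P(y) < y` on `(0,1)`, i.e. efficient individuals are favoured. -/
theorem stmt_14 (κ : ℝ) (hκ : κ ∈ Set.Ioo (0:ℝ) 1) (y : ℝ) (hy : y ∈ Set.Ioo (0:ℝ) 1) :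
    (∫ u in (1 - y)..1, Real.exp (-2 * κ * u)) / (∫ u in (0:ℝ)..1, Real.exp (-2 * κ * u))
      = (Real.exp (-2 * κ * (1 - y)) - Real.exp (-2 * κ)) / (1 - Real.exp (-2 * κ)) ∧
    (Real.exp (-2 * κ * (1 - y)) - Real.exp (-2 * κ)) / (1 - Real.exp (-2 * κ)) < y := by
  have hc : -2 * κ < 0 := by linarith [hκ.1]
  exact ⟨integral_exp_const_mul_ratio hc.ne _, exp_mul_one_sub_sub_div_lt hc hy⟩
end

section
/- Let Z be the continuous-time Markov chain on {1,2,3,...} with jump rates q(j, j+1) = αj + κj(j-1)/2 and q(j, j-1) = j(j-1)/2, with κ = 1 and α ∈ [0, 1/2). Then for the Lyapunov function f(n) = log n, the generator satisfies (Qf)(n) = αn·log(1+1/n) + (n(n-1)/2)·(log(1-1/n) + log(1+1/n)) for n ≥ 2, and there exist ε > 0 and N₀ such that (Qf)(n) ≤ -ε for all n ≥ N₀. -/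
/-!
Writing the drift in terms of `log (1 ± 1/n)` and using `log y ≤ y - 1`, the birth term
contributes at most `α`, while the quadratic rates give
`n(n-1)/2 · log (1 - 1/n²) ≤ -(n-1)/(2n) = -1/2 + 1/(2n)`.
Hence `(Qf)(n) ≤ α - 1/2 + 1/(2n)`, which is eventually below `-(1/2 - α)/2`.
-/

open Real Filter

namespace Real

lemma log_one_add_inv_eq {x : ℝ} (hx : 0 < x) : log (1 + 1 / x) = log (x + 1) - log x := by
  rw [← log_div (by positivity) hx.ne']
  congr 1
  field_simp

lemma log_one_sub_inv_eq {x : ℝ} (hx : 1 < x) : log (1 - 1 / x) = log (x - 1) - log x := by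
  rw [← log_div (by linarith) (by positivity)]
  congr 1
  field_simp

lemma mul_log_one_add_inv_le_one {x : ℝ} (hx : 0 < x) : x * log (1 + 1 / x) ≤ 1 := by
  have hlog : log (1 + 1 / x) ≤ 1 / x := by
    linarith [log_le_sub_one_of_pos (by positivity : 0 < 1 + 1 / x)]
  calc x * log (1 + 1 / x) ≤ x * (1 / x) := mul_le_mul_of_nonneg_left hlog hx.le
    _ = 1 := by field_simp

lemma log_one_sub_inv_add_log_one_add_inv_le {x : ℝ} (hx : 1 < x) :
    log (1 - 1 / x) + log (1 + 1 / x) ≤ -(1 / x ^ 2) := by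
  have hsub : 0 < 1 - 1 / x := by
    rw [sub_pos, div_lt_one (by linarith)]
    exact hx
  rw [← log_mul hsub.ne' (by positivity)]
  calc log ((1 - 1 / x) * (1 + 1 / x)) ≤ (1 - 1 / x) * (1 + 1 / x) - 1 :=
        log_le_sub_one_of_pos (by positivity)
    _ = -(1 / x ^ 2) := by ring

end Real

lemma log_drift_le {α x : ℝ} (hα : 0 ≤ α) (hx : 1 < x) :
    α * x * log (1 + 1 / x) + x * (x - 1) / 2 * (log (1 - 1 / x) + log (1 + 1 / x))
      ≤ α - 1 / 2 + 1 / 2 / x := by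
  have hbirth : α * x * log (1 + 1 / x) ≤ α := by
    simpa [mul_assoc] using mul_le_mul_of_nonneg_left (mul_log_one_add_inv_le_one
      (by linarith : 0 < x)) hα
  have hquad : x * (x - 1) / 2 * (log (1 - 1 / x) + log (1 + 1 / x)) ≤ -(1 / 2) + 1 / 2 / x :=
    calc x * (x - 1) / 2 * (log (1 - 1 / x) + log (1 + 1 / x))
        ≤ x * (x - 1) / 2 * -(1 / x ^ 2) :=
          mul_le_mul_of_nonneg_left (log_one_sub_inv_add_log_one_add_inv_le hx)
            (by nlinarith)
      _ = -(1 / 2) + 1 / 2 / x := by field_simp; ring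
  linarith

/-- Foster–Lyapunov drift condition for the vertex counting process of the ASEG with
`κ = 1` and `α ∈ [0,1/2)`, using the Lyapunov function `f(n) = log n`. -/
theorem stmt_15 (α : ℝ) (hα : α ∈ Set.Ico (0:ℝ) (1/2))
    (Qf : ℕ → ℝ)
    (hQf : ∀ n : ℕ, 2 ≤ n →
      Qf n = (α * n + 1 * (n * ((n : ℝ) - 1) / 2)) * (Real.log (n + 1) - Real.log n)
        + (n * ((n : ℝ) - 1) / 2) * (Real.log ((n : ℝ) - 1) - Real.log n)) :
    (∀ n : ℕ, 2 ≤ n →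
      Qf n = α * n * Real.log (1 + 1 / n)
        + (n * ((n : ℝ) - 1) / 2) * (Real.log (1 - 1 / n) + Real.log (1 + 1 / n))) ∧
    ∃ ε > (0:ℝ), ∃ N₀ : ℕ, ∀ n ≥ N₀, Qf n ≤ -ε := by
  obtain ⟨hα0, hα2⟩ := hα
  have hQf' : ∀ n : ℕ, 2 ≤ n → Qf n = α * n * log (1 + 1 / n)
      + (n * ((n : ℝ) - 1) / 2) * (log (1 - 1 / n) + log (1 + 1 / n)) := by
    intro n hn
    have hn' : (1 : ℝ) < n := by exact_mod_cast hn
    rw [hQf n hn, log_one_add_inv_eq (by linarith), log_one_sub_inv_eq hn']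
    ring
  refine ⟨hQf', (1 / 2 - α) / 2, by linarith, eventually_atTop.mp ?_⟩
  have hsmall : ∀ᶠ n : ℕ in atTop, 1 / 2 / (n : ℝ) < (1 / 2 - α) / 2 :=
    (tendsto_order.1 (tendsto_const_div_atTop_nhds_zero_nat (1 / 2 : ℝ))).2 _ (by linarith)
  filter_upwards [hsmall, eventually_ge_atTop 2] with n hn hn2
  rw [hQf' n hn2]
  linarith [log_drift_le hα0 (by exact_mod_cast hn2 : (1 : ℝ) < n)]
end
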